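/- There is no finite set X of sound syllogistic rules in 𝒮†₁ such that the indirect derivation relation ⊩_X (with reductio ad absurdum) is complete: for any such X, there is a finite unsatisfiable set Γ of 𝒮†₁-formulas from which no absurdity is derivable via ⊩_X. -/

import Mathlib

/-- Literals over a set of atoms `P`: an atom or a negated atom. -/
inductive Lit (P : Type) : Type
  | pos (p : P)
  | neg (p : P)
deriving DecidableEq

/-- Formulas of the (extended) numerical syllogistic: `∃_{≤ i}(ℓ,m)` and `∃_{> i}(ℓ,m)`. -/
inductive Fm (P : Type) : Type
  | le (i : ℕ) (l m : Lit P)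
  | gt (i : ℕ) (l m : Lit P)
deriving DecidableEq

/-- Interpretation of a literal in a structure with domain `A` given by `I`. -/
def Lit.interp {P A : Type} (I : P → Set A) : Lit P → Set A
  | .pos p => I p
  | .neg p => (I p)ᶜ

/-- Truth of a formula in a structure: cardinality constraints on `ℓ^𝔄 ∩ m^𝔄`. -/
def Fm.sat {P A : Type} (I : P → Set A) : Fm P → Prop
  | .le i l m => Cardinal.mk ↥(l.interp I ∩ m.interp I) ≤ (i : Cardinal)
  | .gt i l m => (i : Cardinal) < Cardinal.mk ↥(l.interp I ∩ m.interp I)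

/-- Semantic entailment: every structure (nonempty domain) satisfying `Θ` satisfies `ψ`. -/
def Entails {P : Type} (Θ : Set (Fm P)) (ψ : Fm P) : Prop :=
  ∀ (A : Type) (_ : Nonempty A) (I : P → Set A), (∀ φ ∈ Θ, φ.sat I) → ψ.sat I

/-- The negation map, swapping `∃_{≤ i}` and `∃_{> i}`. -/
def Fm.negate {P : Type} : Fm P → Fm P
  | .le i l m => .gt i l m
  | .gt i l m => .le i l m

/-- Swap the (unordered) arguments of a formula. -/
def Fm.swap {P : Type} : Fm P → Fm P
  | .le i l m => .le i m l
  | .gt i l m => .gt i m l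

/-- The numerical index of a formula. -/
def Fm.idx {P : Type} : Fm P → ℕ
  | .le i _ _ => i
  | .gt i _ _ => i

/-- The atom of a literal. -/
def Lit.atom {P : Type} : Lit P → P
  | .pos p => p
  | .neg p => p

/-- The two (unordered) literal arguments of a formula. -/
def Fm.args {P : Type} : Fm P → Lit P × Lit P
  | .le _ l m => (l, m)
  | .gt _ l m => (l, m)

/-- All atoms of a formula lie in `S`. -/
def Fm.atomsIn {P : Type} (S : Set P) (φ : Fm P) : Prop :=
  φ.args.1.atom ∈ S ∧ φ.args.2.atom ∈ S

/-- Applying a substitution to a literal. -/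
def Lit.map {P : Type} (g : P → P) : Lit P → Lit P
  | .pos p => .pos (g p)
  | .neg p => .neg (g p)

/-- Applying a substitution to a formula. -/
def Fm.map {P : Type} (g : P → P) : Fm P → Fm P
  | .le i l m => .le i (l.map g) (m.map g)
  | .gt i l m => .gt i (l.map g) (m.map g)

/-- A syllogistic rule: a finite set of antecedents and a consequent. -/
structure Rule (P : Type) where
  ants : Finset (Fm P)
  con : Fm P

/-- The direct syllogistic derivation relation `⊢_X`. -/
inductive Derives {P : Type} (X : Set (Rule P)) : Set (Fm P) → Fm P → Prop
  | prem {Θ : Set (Fm P)} {θ : Fm P} : θ ∈ Θ → Derives X Θ θ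
  | rule {Θ : Set (Fm P)} (r : Rule P) (g : P → P) : r ∈ X →
      (∀ ψ ∈ r.ants, Derives X Θ (ψ.map g)) → Derives X Θ (r.con.map g)

/-- The indirect syllogistic derivation relation `⊩_X` (with reductio ad absurdum). -/
inductive IndDerives {P : Type} (X : Set (Rule P)) : Set (Fm P) → Fm P → Prop
  | prem {Θ : Set (Fm P)} {θ : Fm P} : θ ∈ Θ → IndDerives X Θ θ
  | rule {Θ : Set (Fm P)} (r : Rule P) (g : P → P) : r ∈ X →
      (∀ ψ ∈ r.ants, IndDerives X Θ (ψ.map g)) → IndDerives X Θ (r.con.map g)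
  | raa {Θ : Set (Fm P)} {θ : Fm P} (i : ℕ) (p : P) :
      IndDerives X (insert θ Θ) (Fm.gt i (Lit.pos p) (Lit.neg p)) →
      IndDerives X Θ θ.negate

/-!
Take `t` larger than one plus the number of antecedents of any rule of `X`. The set `gamma t` puts
`2t` "caps" on the atoms `inl i`, pairs of literals around a cycle of length `2t`, each of size at
most `1`; every element lies in some cap, so a model has at most `2t` elements, whereas `gamma t`
also asks for `t + 1` pairwise disjoint atoms `inr k` with two elements each.

Nevertheless `gamma t` lies in the complete theory `theory t`, which gives every pair of literals a
virtual intersection size in `{0, 1, 2}`: on the atoms `inl i` the size in a fixed `2t`-element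
structure (a twisted ring counter), otherwise `0` or `2` according as the literals clash or not.
Every set of fewer than `t` formulas of `theory t` with indices at most `1` has a model, namely the
ring counter plus fresh witnesses in a column that none of its caps occupies. By soundness,
`theory t` is closed under the instances of the rules of `X`; a reductio cannot start from a formula
of `theory t` (it would derive an absurdity inside `theory t`), so it concludes the negation of a
formula outside `theory t`, which lies in `theory t` by completeness. Hence every formula derivable
from `gamma t` lies in `theory t`, and no absurdity does.
-/

namespace Lit

lemma interp_map {P A : Type} (I : P → Set A) (g : P → P) (l : Lit P) :
    (l.map g).interp I = l.interp (I ∘ g) := by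
  cases l <;> rfl

end Lit

namespace Fm

variable {P A : Type}

lemma sat_map (I : P → Set A) (g : P → P) (φ : Fm P) : (φ.map g).sat I ↔ φ.sat (I ∘ g) := by
  cases φ <;> simp only [Fm.map, Fm.sat, Lit.interp_map]

lemma sat_negate (I : P → Set A) (φ : Fm P) : φ.negate.sat I ↔ ¬ φ.sat I := by
  cases φ <;> simp only [Fm.negate, Fm.sat, not_le, not_lt]

@[simp] lemma idx_negate (φ : Fm P) : φ.negate.idx = φ.idx := by
  cases φ <;> rfl

@[simp] lemma idx_map (g : P → P) (φ : Fm P) : (φ.map g).idx = φ.idx := by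
  cases φ <;> rfl

variable {I : P → Set A} {l m : Lit P}

lemma sat_le_zero : (Fm.le 0 l m).sat I ↔ l.interp I ∩ m.interp I = ∅ := by
  simp [Fm.sat, ← Cardinal.mk_set_eq_zero_iff]

lemma sat_le_one : (Fm.le 1 l m).sat I ↔ (l.interp I ∩ m.interp I).Subsingleton := by
  simp [Fm.sat, Cardinal.mk_le_one_iff_set_subsingleton]

lemma sat_gt_zero : (Fm.gt 0 l m).sat I ↔ (l.interp I ∩ m.interp I).Nonempty := by
  simp [Fm.sat, pos_iff_ne_zero, Cardinal.mk_set_ne_zero_iff]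

lemma sat_gt_one : (Fm.gt 1 l m).sat I ↔ (l.interp I ∩ m.interp I).Nontrivial := by
  simp [Fm.sat, Cardinal.one_lt_iff_nontrivial, Set.nontrivial_coe_sort]

end Fm

lemma Entails.sat_map {P A : Type} [Nonempty A] {Θ : Set (Fm P)} {ψ : Fm P}
    (h : Entails Θ ψ) {I : P → Set A} (g : P → P) (hΘ : ∀ φ ∈ Θ, (φ.map g).sat I) :
    (ψ.map g).sat I :=
  (Fm.sat_map I g ψ).2 <| h A ‹_› (I ∘ g) fun φ hφ => (Fm.sat_map I g φ).1 (hΘ φ hφ)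

theorem IndDerives.mem_of_subset {P : Type} {X : Set (Rule P)} {T : Set (Fm P)}
    (hcompl : ∀ φ, φ ∉ T → φ.negate ∈ T) (habs : ∀ i p, Fm.gt i (.pos p) (.neg p) ∉ T)
    (hX : ∀ r ∈ X, ∀ g : P → P, (∀ ψ ∈ r.ants, ψ.map g ∈ T) → r.con.map g ∈ T)
    {Θ : Set (Fm P)} {φ : Fm P} (h : IndDerives X Θ φ) (hΘ : Θ ⊆ T) : φ ∈ T := by
  induction h with
  | prem hθ => exact hΘ hθ
  | rule r g hr _ ih => exact hX r hr g fun ψ hψ => ih ψ hψ hΘ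
  | raa i p _ ih => exact hcompl _ fun hθ => habs i p (ih (Set.insert_subset hθ hΘ))

lemma exists_injective_prod_bool_of_nontrivial {ι A : Type} {s : ι → Set A}
    (hdisj : Pairwise fun i j => Disjoint (s i) (s j)) (hs : ∀ k, (s k).Nontrivial) :
    ∃ g : ι × Bool → A, Function.Injective g := by
  choose u hu v hv huv using hs
  refine ⟨fun kb => if kb.2 then u kb.1 else v kb.1, ?_⟩
  have hmem (k : ι) (b : Bool) : (if b then u k else v k) ∈ s k := by
    cases b <;> simp [hu, hv]
  rintro ⟨k, b⟩ ⟨k', b'⟩ (h : (if b then u k else v k) = if b' then u k' else v k')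
  obtain rfl : k = k' := by
    by_contra hk
    exact Set.disjoint_left.1 (hdisj hk) (hmem k b) (h ▸ hmem k' b')
  cases b <;> cases b' <;> simp_all [eq_comm]

namespace IndirectIncompleteness

abbrev Atom : Type := ℕ ⊕ ℕ

variable (t : ℕ)

/-- The `2t` states of a twisted ring counter of length `t`: the state `(j, b)` satisfies the atom
`inl i` iff `b = decide (i ≤ j)`. -/
def base : Atom → Set (Fin t × Bool)
  | .inl i => {L | L.2 = decide (i ≤ L.1)}
  | .inr _ => ∅

def baseInter (l m : Lit Atom) : Set (Fin t × Bool) := l.interp (base t) ∩ m.interp (base t)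

def genericCard : Lit Atom → Lit Atom → ℕ
  | .pos a, .neg b | .neg a, .pos b => if a = b then 0 else 2
  | .pos (.inr k), .pos (.inr k') => if k = k' then 2 else 0
  | _, _ => 2

noncomputable def virtualCard (l m : Lit Atom) : ℕ :=
  if l.atom.isLeft ∧ m.atom.isLeft then min (baseInter t l m).ncard 2 else genericCard l m

def theory : Set (Fm Atom) := {φ | match φ with
  | .le i l m => virtualCard t l m ≤ i
  | .gt i l m => i < virtualCard t l m}

variable {t}

lemma genericCard_eq_zero_or_two (l m : Lit Atom) : genericCard l m = 0 ∨ genericCard l m = 2 := by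
  unfold genericCard; split <;> try split_ifs
  all_goals simp

lemma virtualCard_pos_inr {k k' : ℕ} (h : k ≠ k') :
    virtualCard t (.pos (.inr k)) (.pos (.inr k')) = 0 := by
  simp [virtualCard, Lit.atom, genericCard, h]

lemma negate_mem_theory {φ : Fm Atom} (h : φ ∉ theory t) : φ.negate ∈ theory t := by
  cases φ <;> simp_all [theory, Fm.negate]

lemma absurd_notMem_theory (i : ℕ) (p : Atom) : Fm.gt i (.pos p) (.neg p) ∉ theory t := by
  rcases p with p | p <;> simp [theory, virtualCard, baseInter, Lit.interp, Lit.atom, genericCard]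

lemma exists_mem_interp_base {l : Lit Atom} (hl : l.atom.isLeft) (j : Fin t) :
    ∃ c, (j, c) ∈ l.interp (base t) := by
  rcases l with (i | k) | (i | k)
  · exact ⟨decide (i ≤ j), rfl⟩
  · simp [Lit.atom] at hl
  · exact ⟨!decide (i ≤ j), by simp [Lit.interp, base]⟩
  · simp [Lit.atom] at hl

def wantsPos : Fm Atom → Atom → Prop
  | .gt _ l m, p => l = .pos p ∨ m = .pos p
  | .le _ _ _, _ => False

lemma not_wantsPos_and_wantsPos {φ : Fm Atom} (hφ : φ ∈ theory t) {k k' : ℕ} (hk : k ≠ k') :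
    ¬ (wantsPos φ (.inr k) ∧ wantsPos φ (.inr k')) := by
  rcases φ with ⟨i, l, m⟩ | ⟨i, l, m⟩
  · simp [wantsPos]
  · rintro ⟨rfl | rfl, h | h⟩ <;>
      simp_all [theory, virtualCard_pos_inr hk, virtualCard_pos_inr (Ne.symm hk)]

abbrev Point (t : ℕ) : Type := (Fin t × Bool) ⊕ (Fm Atom × Bool × Bool)

/-- The points `inr (φ, c, b)` are fresh witnesses for `φ`, located in column `j₀` of the ring
counter. -/
def loc (j₀ : Fin t) : Point t → Fin t × Bool
  | .inl L => L
  | .inr (_, c, _) => (j₀, c)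

variable (Δ : Finset (Fm Atom)) (j₀ : Fin t)

def model : Atom → Set (Point t)
  | .inl i => loc j₀ ⁻¹' base t (.inl i)
  | .inr k => {x | match x with
    | .inl _ => False
    | .inr (φ, _, _) => φ ∈ Δ ∧ wantsPos φ (.inr k)}

def IsFreeColumn : Prop :=
  ∀ φ ∈ Δ, (baseInter t φ.args.1 φ.args.2).Subsingleton →
    ∀ L ∈ baseInter t φ.args.1 φ.args.2, L.1 ≠ j₀

open Classical in
noncomputable def capColumn (φ : Fm Atom) : ℕ :=
  if h : (baseInter t φ.args.1 φ.args.2).Nonempty then h.some.1 else 0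

lemma exists_isFreeColumn (hΔ : Δ.card < t) : ∃ j₀ : Fin t, IsFreeColumn Δ j₀ := by
  obtain ⟨j, hj, hjΔ⟩ := Finset.exists_mem_notMem_of_card_lt_card
    (s := Δ.image (capColumn (t := t))) (t := Finset.range t)
    (by simpa using Finset.card_image_le.trans_lt hΔ)
  refine ⟨⟨j, Finset.mem_range.1 hj⟩, fun φ hφ hsub L hL hLj => hjΔ ?_⟩
  have hne : (baseInter t φ.args.1 φ.args.2).Nonempty := ⟨L, hL⟩
  refine Finset.mem_image.2 ⟨φ, hφ, ?_⟩
  rw [capColumn, dif_pos hne, hsub hne.some_mem hL, hLj]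

variable {Δ j₀} {l m : Lit Atom}

lemma inter_model_of_isLeft (hl : l.atom.isLeft) (hm : m.atom.isLeft) :
    l.interp (model Δ j₀) ∩ m.interp (model Δ j₀) = loc j₀ ⁻¹' baseInter t l m := by
  rcases l with (i | k) | (i | k) <;> rcases m with (i' | k') | (i' | k') <;>
    first | rfl | simp [Lit.atom] at hl hm

lemma inter_model_eq_empty_of_genericCard (hΔ : ↑Δ ⊆ theory t) (h : genericCard l m = 0) :
    l.interp (model Δ j₀) ∩ m.interp (model Δ j₀) = ∅ := by
  rcases l with a | a <;> rcases m with b | b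
  · rcases a with i | k <;> rcases b with i' | k' <;> simp [genericCard] at h
    ext (L | ⟨φ, c, b⟩)
    · simp [Lit.interp, model]
    · simpa [Lit.interp, model] using
        fun hφ hw _ hw' => not_wantsPos_and_wantsPos (hΔ hφ) h ⟨hw, hw'⟩
  all_goals simp [genericCard] at h
  all_goals subst h; simp [Lit.interp]

lemma fresh_mem_interp_model {i : ℕ} (hφ : .gt i l m ∈ Δ) (hl : genericCard l m ≠ 0)
    {n : Lit Atom} (hn : n = l ∨ n = m) {c : Bool}
    (hc : n.atom.isLeft → (j₀, c) ∈ n.interp (base t)) (b : Bool) :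
    Sum.inr (.gt i l m, c, b) ∈ n.interp (model Δ j₀) := by
  rcases n with (i' | k) | (i' | k)
  · exact hc rfl
  · exact ⟨hφ, hn.imp Eq.symm Eq.symm⟩
  · exact hc rfl
  · rintro ⟨-, hl | hm⟩ <;> rcases hn with rfl | rfl <;> simp_all [genericCard]

lemma inter_model_nontrivial_of_genericCard {i : ℕ} (hφ : .gt i l m ∈ Δ)
    (hlm : genericCard l m ≠ 0) (harc : ¬ (l.atom.isLeft ∧ m.atom.isLeft)) :
    (l.interp (model Δ j₀) ∩ m.interp (model Δ j₀)).Nontrivial := by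
  obtain ⟨c, hc⟩ : ∃ c, ∀ n, n = l ∨ n = m → n.atom.isLeft → (j₀, c) ∈ n.interp (base t) := by
    by_cases hl : l.atom.isLeft
    · obtain ⟨c, hc⟩ := exists_mem_interp_base hl j₀
      exact ⟨c, by rintro n (rfl | rfl) hn; exacts [hc, absurd ⟨hl, hn⟩ harc]⟩
    by_cases hm : m.atom.isLeft
    · obtain ⟨c, hc⟩ := exists_mem_interp_base hm j₀
      exact ⟨c, by rintro n (rfl | rfl) hn; exacts [absurd hn hl, hc]⟩
    exact ⟨false, by rintro n (rfl | rfl) hn; exacts [absurd hn hl, absurd hn hm]⟩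
  have hfresh := fun n hn b => fresh_mem_interp_model (j₀ := j₀) hφ hlm (n := n) hn (hc n hn) b
  exact ⟨_, ⟨hfresh l (.inl rfl) false, hfresh m (.inr rfl) false⟩,
    _, ⟨hfresh l (.inl rfl) true, hfresh m (.inr rfl) true⟩, by simp⟩

lemma inter_model_eq_empty (hΔ : ↑Δ ⊆ theory t) (h : virtualCard t l m = 0) :
    l.interp (model Δ j₀) ∩ m.interp (model Δ j₀) = ∅ := by
  unfold virtualCard at h
  split_ifs at h with harc
  · rw [inter_model_of_isLeft harc.1 harc.2,
      (Set.ncard_eq_zero (s := baseInter t l m)).1 (by omega), Set.preimage_empty]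
  · exact inter_model_eq_empty_of_genericCard hΔ h

lemma inter_model_subsingleton (hΔ : ↑Δ ⊆ theory t) (hj₀ : IsFreeColumn Δ j₀) {i : ℕ}
    (hφ : .le i l m ∈ Δ) (h : virtualCard t l m ≤ 1) :
    (l.interp (model Δ j₀) ∩ m.interp (model Δ j₀)).Subsingleton := by
  unfold virtualCard at h
  split_ifs at h with harc
  · have hsub : (baseInter t l m).Subsingleton := Set.ncard_le_one_iff_subsingleton.1 (by omega)
    have hfree := hj₀ _ hφ hsub
    rw [inter_model_of_isLeft harc.1 harc.2]
    rintro (L | ⟨φ, c, b⟩) hx (L' | ⟨φ', c', b'⟩) hy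
    · exact congrArg Sum.inl (hsub hx hy)
    all_goals first | exact absurd rfl (hfree _ hx) | exact absurd rfl (hfree _ hy)
  · rw [inter_model_eq_empty_of_genericCard hΔ
      (by have := genericCard_eq_zero_or_two l m; omega)]
    exact Set.subsingleton_empty

lemma inter_model_nontrivial {i : ℕ} (hφ : .gt i l m ∈ Δ) (h : 1 < virtualCard t l m) :
    (l.interp (model Δ j₀) ∩ m.interp (model Δ j₀)).Nontrivial := by
  unfold virtualCard at h
  split_ifs at h with harc
  · obtain ⟨L, hL, L', hL', hne⟩ :=
      (Set.one_lt_ncard_iff_nontrivial (s := baseInter t l m)).1 (by omega)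
    rw [inter_model_of_isLeft harc.1 harc.2]
    exact ⟨.inl L, hL, .inl L', hL', by simpa using hne⟩
  · exact inter_model_nontrivial_of_genericCard hφ (by omega) harc

lemma inter_model_nonempty {i : ℕ} (hφ : .gt i l m ∈ Δ) (h : 0 < virtualCard t l m) :
    (l.interp (model Δ j₀) ∩ m.interp (model Δ j₀)).Nonempty := by
  rcases Nat.lt_or_ge 1 (virtualCard t l m) with h2 | h1
  · exact (inter_model_nontrivial hφ h2).nonempty
  unfold virtualCard at h
  split_ifs at h with harc
  · obtain ⟨L, hL⟩ := (Set.ncard_pos (s := baseInter t l m)).1 (by omega)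
    rw [inter_model_of_isLeft harc.1 harc.2]
    exact ⟨.inl L, hL⟩
  · exact (inter_model_nontrivial_of_genericCard hφ (by omega) harc).nonempty

theorem exists_model_of_subset_theory (hcard : Δ.card < t) (hΔ : ↑Δ ⊆ theory t)
    (hidx : ∀ φ ∈ Δ, φ.idx ≤ 1) :
    ∃ (A : Type) (_ : Nonempty A) (I : Atom → Set A), ∀ φ ∈ Δ, φ.sat I := by
  obtain ⟨j₀, hj₀⟩ := exists_isFreeColumn Δ hcard
  refine ⟨Point t, ⟨.inl (j₀, false)⟩, model Δ j₀, fun φ hφ => ?_⟩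
  have hT : φ ∈ theory t := hΔ hφ
  have hi := hidx φ hφ
  rcases φ with ⟨i, l, m⟩ | ⟨i, l, m⟩ <;>
    simp only [theory, Fm.idx, Set.mem_ofPred_eq] at hT hi <;> interval_cases i
  · exact Fm.sat_le_zero.2 (inter_model_eq_empty hΔ (by omega))
  · exact Fm.sat_le_one.2 (inter_model_subsingleton hΔ hj₀ hφ hT)
  · exact Fm.sat_gt_zero.2 (inter_model_nonempty hφ hT)
  · exact Fm.sat_gt_one.2 (inter_model_nontrivial hφ hT)

lemma map_con_mem_theory {r : Rule Atom} (hsound : Entails ↑r.ants r.con)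
    (hidx : r.con.idx ≤ 1 ∧ ∀ ψ ∈ r.ants, ψ.idx ≤ 1) (hcard : r.ants.card + 1 < t)
    (g : Atom → Atom) (hants : ∀ ψ ∈ r.ants, ψ.map g ∈ theory t) : r.con.map g ∈ theory t := by
  by_contra hcon
  let Δ := insert (r.con.map g).negate (r.ants.image (Fm.map g))
  obtain ⟨A, hA, I, hI⟩ := exists_model_of_subset_theory (t := t) (Δ := Δ)
    ((Finset.card_insert_le _ _).trans_lt (by have := r.ants.card_image_le (f := Fm.map g); omega))
    (by simpa [Δ, Set.insert_subset_iff] using ⟨negate_mem_theory hcon, hants⟩)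
    (by simpa [Δ] using hidx)
  exact (Fm.sat_negate I _).1 (hI _ (Finset.mem_insert_self _ _)) <|
    hsound.sat_map g fun ψ hψ => hI _ (Finset.mem_insert_of_mem (Finset.mem_image_of_mem _ hψ))

variable (t)

def lit : Bool → Atom → Lit Atom
  | true, p => .pos p
  | false, p => .neg p

/-- In the last column the cap wraps around to `inl 0` keeping the sign of its first literal; this
is what makes `gamma t` unsatisfiable. -/
def nextLit (L : Fin t × Bool) : Lit Atom :=
  if L.1 + 1 < t then lit (!L.2) (.inl (L.1 + 1)) else lit L.2 (.inl 0)

def cap (L : Fin t × Bool) : Fm Atom := .le 1 (lit L.2 (.inl L.1)) (nextLit t L)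

def q (k : ℕ) : Lit Atom := .pos (.inr k)

def gamma : Set (Fm Atom) :=
  Set.range (cap t) ∪ Set.range (fun k : Fin (t + 1) => Fm.gt 1 (q k) (q k)) ∪
    (fun p : Fin (t + 1) × Fin (t + 1) => Fm.le 0 (q p.1) (q p.2)) '' {p | p.1 ≠ p.2}

lemma gamma_finite : (gamma t).Finite :=
  ((Set.finite_range _).union (Set.finite_range _)).union ((Set.toFinite _).image _)

lemma gamma_idx : ∀ φ ∈ gamma t, φ.idx ≤ 1 := by
  rintro φ ((⟨L, rfl⟩ | ⟨k, rfl⟩) | ⟨p, -, rfl⟩) <;> simp [cap, Fm.idx]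

variable {t}

lemma mem_interp_lit {A : Type} {I : Atom → Set A} {x : A} {b : Bool} {p : Atom} :
    x ∈ (lit b p).interp I ↔ (x ∈ I p ↔ b = true) := by
  cases b <;> simp [lit, Lit.interp]

lemma baseInter_cap (L : Fin t × Bool) :
    baseInter t (lit L.2 (.inl L.1)) (nextLit t L) = {L} := by
  obtain ⟨⟨j, hj⟩, b⟩ := L
  ext ⟨⟨j', hj'⟩, b'⟩
  simp only [baseInter, nextLit, Set.mem_inter_iff, Set.mem_singleton_iff, Prod.mk.injEq,
    Fin.mk.injEq]
  split_ifs <;> cases b <;> cases b' <;> simp [mem_interp_lit, base] <;> omega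

lemma gamma_subset_theory : gamma t ⊆ theory t := by
  rintro φ ((⟨L, rfl⟩ | ⟨k, rfl⟩) | ⟨p, hp, rfl⟩)
  · have harc : (lit L.2 (.inl L.1)).atom.isLeft ∧ (nextLit t L).atom.isLeft := by
      unfold nextLit; split_ifs <;> cases L.2 <;> simp [lit, Lit.atom]
    simp [theory, cap, virtualCard, harc, baseInter_cap]
  · simp [theory, q, virtualCard, Lit.atom, genericCard]
  · simp [theory, q, virtualCard_pos_inr (Fin.val_injective.ne hp)]

lemma exists_mem_cap (ht : 0 < t) {A : Type} (I : Atom → Set A) (x : A) :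
    ∃ L : Fin t × Bool, x ∈ (lit L.2 (.inl L.1)).interp I ∩ (nextLit t L).interp I := by
  classical
  by_cases h : ∃ j, j + 1 < t ∧ ¬ (x ∈ I (.inl j) ↔ x ∈ I (.inl (j + 1)))
  · obtain ⟨j, hj, hne⟩ := h
    exact ⟨(⟨j, by omega⟩, decide (x ∈ I (.inl j))), by simp [nextLit, hj, mem_interp_lit]; tauto⟩
  push Not at h
  have hconst : ∀ j < t, (x ∈ I (.inl j) ↔ x ∈ I (.inl 0)) := by
    intro j hj
    induction j with
    | zero => rfl
    | succ j ih => exact (h j hj).symm.trans (ih (by omega))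
  refine ⟨(⟨t - 1, by omega⟩, decide (x ∈ I (.inl 0))), ?_⟩
  simp [nextLit, show ¬ t - 1 + 1 < t by omega, mem_interp_lit, hconst (t - 1) (by omega)]

theorem gamma_unsatisfiable (ht : 0 < t) :
    ¬ ∃ (A : Type) (_ : Nonempty A) (I : Atom → Set A), ∀ φ ∈ gamma t, φ.sat I := by
  rintro ⟨A, -, I, hI⟩
  have hcap (L : Fin t × Bool) :
      ((lit L.2 (.inl L.1)).interp I ∩ (nextLit t L).interp I).Subsingleton :=
    Fm.sat_le_one.1 (hI _ (.inl (.inl ⟨L, rfl⟩)))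
  have hq (k : Fin (t + 1)) : (I (.inr k)).Nontrivial := by
    simpa [q, Lit.interp] using Fm.sat_gt_one.1 (hI _ (.inl (.inr ⟨k, rfl⟩)))
  have hdisj : Pairwise fun k k' : Fin (t + 1) => Disjoint (I (.inr k)) (I (.inr k')) :=
    fun k k' hk => Set.disjoint_iff_inter_eq_empty.2
      (Fm.sat_le_zero.1 (hI _ (.inr ⟨(k, k'), hk, rfl⟩)))
  obtain ⟨g, hg⟩ := exists_injective_prod_bool_of_nontrivial hdisj hq
  choose f hf using exists_mem_cap ht I
  have hfg : Function.Injective (f ∘ g) := fun a b (hab : f (g a) = f (g b)) =>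
    hg (hcap _ (hf (g a)) (hab ▸ hf (g b)))
  simpa using Fintype.card_le_of_injective _ hfg

end IndirectIncompleteness

/-- no finite set of sound syllogistic rules in `𝒮†₁` yields a complete
indirect derivation relation: there is a finite unsatisfiable set of `𝒮†₁`-formulas from
which no absurdity is indirectly derivable. -/
theorem no_complete_indirect_system (X : Finset (Rule (Sum ℕ ℕ)))
    (hlang : ∀ r ∈ X, r.con.idx ≤ 1 ∧ ∀ ψ ∈ r.ants, ψ.idx ≤ 1)
    (hsound : ∀ r ∈ X, Entails (↑r.ants : Set (Fm (Sum ℕ ℕ))) r.con) :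
    ∃ Γ : Set (Fm (Sum ℕ ℕ)), Γ.Finite ∧ (∀ φ ∈ Γ, φ.idx ≤ 1) ∧
      (¬ ∃ (A : Type) (_ : Nonempty A) (I : Sum ℕ ℕ → Set A), ∀ φ ∈ Γ, φ.sat I) ∧
      ∀ (i : ℕ) (p : Sum ℕ ℕ),
        ¬ IndDerives (↑X : Set (Rule (Sum ℕ ℕ))) Γ (Fm.gt i (Lit.pos p) (Lit.neg p)) := by
  open IndirectIncompleteness in
  obtain ⟨t, ht, hX⟩ : ∃ t, 0 < t ∧ ∀ r ∈ X, r.ants.card + 1 < t :=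
    ⟨X.sup (·.ants.card) + 2, by omega,
      fun r hr => by have := X.le_sup (f := (·.ants.card)) hr; omega⟩
  refine ⟨gamma t, gamma_finite t, gamma_idx t, gamma_unsatisfiable ht, fun i p hder => ?_⟩
  have hclosed : ∀ r ∈ (↑X : Set (Rule Atom)), ∀ g, (∀ ψ ∈ r.ants, ψ.map g ∈ theory t) →
      r.con.map g ∈ theory t :=
    fun r hr => map_con_mem_theory (hsound r hr) (hlang r hr) (hX r hr)
  exact absurd_notMem_theory i p <| hder.mem_of_subset (fun _ => negate_mem_theory)
    absurd_notMem_theory hclosed gamma_subset_theory
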